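/- arXiv:2605.27307 — 2 statements merged into one kernel-verified Lean document; each statement's English description precedes it below -/
import Mathlib

section
/- Let 𝒯 be a triangle family and let n be a positive integer with n ≤ ⌈λ(𝒯)⌉. Then for every edge {x,y} of the support graph G = Γ₀(𝒯), the number of common neighbors of x and y in G satisfies |N_G(x) ∩ N_G(y)| ≥ n − 2. -/
/-
Let `t` be the number of triangles through the edge `ω = {x, y}` and `u` the indicator vector
of `ω`. For `L = δ₁ᵀ δ₁` one has `⟪u, Lu⟫ = t`, and `‖Lu‖² ≤ t (t + 2)` because two distinct
edges lie in at most one common triangle while each triangle has only two edges besides `ω`.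
An eigenbasis expansion of `u` then produces a positive eigenvalue of `L` that is at most
`t + 2`, and `t` is at most the number of common neighbours of `x` and `y`.
-/

open Finset Matrix

/-- The sign `[T : e]` of an edge `e` in a triangle `T`. -/
noncomputable def triSign (T e : Finset ℕ) : ℝ :=
  if e ⊆ T ∧ e.card = 2 ∧ T.card = 3 then
    if (T \ e).max = T.max ∨ (T \ e).min = T.min then 1 else -1
  else 0

/-- A triangle family: a nonempty finite set of 3-element subsets of ℕ. -/
def IsTriFam (F : Finset (Finset ℕ)) : Prop :=
  F.Nonempty ∧ ∀ T ∈ F, T.card = 3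

/-- The edges of the support graph of a triangle family. -/
def edgesOf (F : Finset (Finset ℕ)) : Finset (Finset ℕ) :=
  F.biUnion fun T => T.powersetCard 2

/-- The vertices of the support graph of a triangle family. -/
def vertsOf (F : Finset (Finset ℕ)) : Finset ℕ :=
  F.biUnion id

/-- The signed edge-triangle incidence matrix of a triangle family. -/
noncomputable def delta1 (F : Finset (Finset ℕ)) :
    Matrix {T // T ∈ F} {e // e ∈ edgesOf F} ℝ :=
  Matrix.of fun T e => triSign T.1 e.1

/-- The smallest positive eigenvalue of a matrix. -/
noncomputable def lambdaMinPos {m : Type*} [Fintype m] (M : Matrix m m ℝ) : ℝ :=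
  sInf {μ : ℝ | 0 < μ ∧ ∃ v : m → ℝ, v ≠ 0 ∧ M.mulVec v = μ • v}

/-- `λ(𝒯)`: the smallest positive eigenvalue of `δ₁(𝒯)ᵀ δ₁(𝒯)`. -/
noncomputable def lam (F : Finset (Finset ℕ)) : ℝ :=
  lambdaMinPos ((delta1 F)ᵀ * delta1 F)

/-- The neighborhood of `x` in the support graph `Γ₀(F)`. -/
def nbrs (F : Finset (Finset ℕ)) (x : ℕ) : Finset ℕ :=
  (vertsOf F).filter fun y => x ≠ y ∧ ∃ T ∈ F, x ∈ T ∧ y ∈ T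

/-- `φ(t)`: the maximum of `λ(𝒯)` over triangle families with `|𝒯| = t`. -/
noncomputable def phi (t : ℕ) : ℝ :=
  sSup {r : ℝ | ∃ F : Finset (Finset ℕ), IsTriFam F ∧ F.card = t ∧ lam F = r}

/-- `Λ(t) = max_{1 ≤ s ≤ t} φ(s)`. -/
noncomputable def Lam (t : ℕ) : ℝ :=
  sSup {r : ℝ | ∃ s : ℕ, 1 ≤ s ∧ s ≤ t ∧ phi s = r}

/-- `H(n) = min{ s ≥ 1 : φ(C(n,3)+s) > n - 1 }`. -/
noncomputable def Hfun (n : ℕ) : ℕ :=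
  sInf {s : ℕ | 1 ≤ s ∧ (n : ℝ) - 1 < phi (n.choose 3 + s)}

/-- The triangle family `𝒯_{c,b}`: all 3-cliques of `K_c ∨ (b isolated vertices)`. -/
def Tcb (c b : ℕ) : Finset (Finset ℕ) :=
  ((Finset.Icc 1 c).powersetCard 3) ∪
    (Finset.Icc (c+1) (c+b)).biUnion
      (fun i => ((Finset.Icc 1 c).powersetCard 2).image (fun p => insert i p))

lemma OrthonormalBasis.sum_dotProduct_mul_dotProduct {ι m : Type*} [Fintype ι] [Fintype m]
    (b : OrthonormalBasis ι ℝ (EuclideanSpace ℝ m)) (v w : m → ℝ) :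
    ∑ i, (⇑(b i) ⬝ᵥ v) * (⇑(b i) ⬝ᵥ w) = v ⬝ᵥ w := by
  simpa [EuclideanSpace.inner_eq_star_dotProduct, dotProduct_comm] using
    b.sum_inner_mul_inner (WithLp.toLp 2 v) (WithLp.toLp 2 w)

namespace Matrix.IsHermitian

variable {m : Type*} [Fintype m] [DecidableEq m] {L : Matrix m m ℝ}

lemma eigenvectorBasis_dotProduct_mulVec (hL : L.IsHermitian) (u : m → ℝ) (i : m) :
    ⇑(hL.eigenvectorBasis i) ⬝ᵥ L *ᵥ u =
      hL.eigenvalues i * (⇑(hL.eigenvectorBasis i) ⬝ᵥ u) := by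
  have hLt : Lᵀ = L := by simpa [conjTranspose_eq_transpose_of_trivial] using hL.eq
  rw [dotProduct_mulVec, ← mulVec_transpose, hLt, hL.mulVec_eigenvectorBasis, smul_dotProduct,
    smul_eq_mul]

/-- Expanding `u` in an eigenbasis, `⟪u, Lu⟫ = ∑ μᵢ aᵢ²` and `‖Lu‖² = ∑ μᵢ² aᵢ²`; if no
eigenvalue lay in `(0, c]`, every term of `∑ μᵢ (μᵢ - c) aᵢ²` would be nonnegative and the one
with `μᵢ aᵢ² > 0` positive. -/
theorem exists_eigenvalue_mem_Ioc (hL : L.IsHermitian) {u : m → ℝ} {c : ℝ}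
    (hu : 0 < u ⬝ᵥ L *ᵥ u) (hc : L *ᵥ u ⬝ᵥ L *ᵥ u ≤ c * (u ⬝ᵥ L *ᵥ u)) :
    ∃ μ ∈ Set.Ioc 0 c, ∃ v ≠ 0, L *ᵥ v = μ • v := by
  set b := hL.eigenvectorBasis
  set μ := hL.eigenvalues
  set a : m → ℝ := fun i => ⇑(b i) ⬝ᵥ u
  have hquad : u ⬝ᵥ L *ᵥ u = ∑ i, μ i * a i ^ 2 := by
    rw [← b.sum_dotProduct_mul_dotProduct]
    exact Finset.sum_congr rfl fun i _ => by rw [hL.eigenvectorBasis_dotProduct_mulVec]; ring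
  have hnorm : L *ᵥ u ⬝ᵥ L *ᵥ u = ∑ i, μ i ^ 2 * a i ^ 2 := by
    rw [← b.sum_dotProduct_mul_dotProduct]
    exact Finset.sum_congr rfl fun i _ => by rw [hL.eigenvectorBasis_dotProduct_mulVec]; ring
  by_contra! hno
  have hc0 : 0 ≤ c := nonneg_of_mul_nonneg_left ((dotProduct_self_star_nonneg _).trans hc) hu
  have hgap : ∀ i, 0 < μ i → c < μ i := fun i hi => lt_of_not_ge fun hle =>
    hno (μ i) ⟨hi, hle⟩ _ (by simpa using b.orthonormal.ne_zero i) (hL.mulVec_eigenvectorBasis i)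
  have hsum : ∑ _i : m, (0 : ℝ) < ∑ i, μ i * a i ^ 2 := by simpa [hquad] using hu
  obtain ⟨i, -, hi⟩ := Finset.exists_lt_of_sum_lt hsum
  have hμi : 0 < μ i := pos_of_mul_pos_left hi (sq_nonneg _)
  have hpos : 0 < ∑ i, μ i * (μ i - c) * a i ^ 2 := by
    refine Finset.sum_pos' (fun j _ => ?_) ⟨i, Finset.mem_univ i, ?_⟩
    · rcases le_or_gt (μ j) 0 with hj | hj
      · exact mul_nonneg (mul_nonneg_of_nonpos_of_nonpos hj (by linarith)) (sq_nonneg _)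
      · exact mul_nonneg (mul_nonneg hj.le (by linarith [hgap j hj])) (sq_nonneg _)
    · have := mul_pos hi (sub_pos.2 (hgap i hμi))
      linarith
  have hexpand : ∑ i, μ i * (μ i - c) * a i ^ 2 =
      L *ᵥ u ⬝ᵥ L *ᵥ u - c * (u ⬝ᵥ L *ᵥ u) := by
    rw [hnorm, hquad, Finset.mul_sum, ← Finset.sum_sub_distrib]
    exact Finset.sum_congr rfl fun i _ => by ring
  linarith

end Matrix.IsHermitian

lemma lambdaMinPos_le_of_sum_sq_col_le {m : Type*} [Fintype m] [DecidableEq m]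
    {M : Matrix m m ℝ} (hM : M.IsHermitian) {j : m} {c : ℝ} (hj : 0 < M j j)
    (hcol : ∑ i, M i j ^ 2 ≤ c * M j j) : lambdaMinPos M ≤ c := by
  have hquad : Pi.single j 1 ⬝ᵥ M *ᵥ Pi.single j 1 = M j j := by
    rw [mulVec_single_one, single_one_dotProduct, col_apply]
  have hnorm : M *ᵥ Pi.single j 1 ⬝ᵥ M *ᵥ Pi.single j 1 = ∑ i, M i j ^ 2 := by
    simp only [mulVec_single_one, dotProduct, col_apply, sq]
  obtain ⟨μ, ⟨hμ, hμc⟩, hv⟩ :=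
    hM.exists_eigenvalue_mem_Ioc (hquad ▸ hj) (by rwa [hquad, hnorm])
  unfold lambdaMinPos
  exact (csInf_le ⟨0, fun r hr => hr.1.le⟩ (Set.mem_ofPred.2 ⟨hμ, hv⟩)).trans hμc

lemma sq_sum_eq_sum_sq_of_card_support_le_one {ι : Type*} [Fintype ι] {f : ι → ℝ}
    (hf : #{i | f i ≠ 0} ≤ 1) : (∑ i, f i) ^ 2 = ∑ i, f i ^ 2 := by
  by_cases hzero : ∃ i, f i ≠ 0
  swap
  · push Not at hzero
    simp [hzero]
  obtain ⟨i₀, hi₀⟩ := hzero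
  have honly : ∀ i, i ≠ i₀ → f i = 0 := fun i hi => by
    by_contra h
    exact hi (Finset.card_le_one.1 hf i (by simpa using h) i₀ (by simpa using hi₀))
  rw [Finset.sum_eq_single i₀ (fun i _ hi => honly i hi) (by simp),
    Finset.sum_eq_single i₀ (fun i _ hi => by simp [honly i hi]) (by simp)]

/-- An off-diagonal entry of column `j` is a sum with at most one nonzero term, so its square is
`∑ i, D i j ^ 2 * D i l ^ 2`; summed over `l ≠ j`, each row through `j` contributes at most
`k - 1`. -/
theorem sum_sq_transpose_mul_self_col_le {ι κ : Type*} [Fintype ι] [Fintype κ] [DecidableEq κ]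
    (D : Matrix ι κ ℝ) (j : κ) (k : ℝ) (hD : ∀ i l, D i l = 0 ∨ D i l ^ 2 = 1)
    (hrow : ∀ i, ∑ l, D i l ^ 2 ≤ k) (hpair : ∀ l ≠ j, #{i | D i l * D i j ≠ 0} ≤ 1) :
    ∑ l, (Dᵀ * D) l j ^ 2 ≤ ((Dᵀ * D) j j + (k - 1)) * (Dᵀ * D) j j := by
  have hG : ∀ l, (Dᵀ * D) l j = ∑ i, D i l * D i j := fun l => by
    simp only [mul_apply, transpose_apply]
  have hoff : ∀ l ≠ j, (Dᵀ * D) l j ^ 2 = ∑ i, D i j ^ 2 * D i l ^ 2 := fun l hl => by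
    rw [hG, sq_sum_eq_sum_sq_of_card_support_le_one (hpair l hl)]
    exact Finset.sum_congr rfl fun i _ => by ring
  have hrest : ∀ i, D i j ^ 2 * ∑ l ∈ univ.erase j, D i l ^ 2 ≤ (k - 1) * D i j ^ 2 := by
    intro i
    rcases hD i j with h | h
    · simp [h]
    · have := Finset.add_sum_erase univ (fun l => D i l ^ 2) (mem_univ j)
      rw [h] at this ⊢
      linarith [hrow i]
  calc ∑ l, (Dᵀ * D) l j ^ 2
      = (Dᵀ * D) j j ^ 2 + ∑ l ∈ univ.erase j, (Dᵀ * D) l j ^ 2 :=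
        (Finset.add_sum_erase _ _ (mem_univ j)).symm
    _ = (Dᵀ * D) j j ^ 2 + ∑ i, D i j ^ 2 * ∑ l ∈ univ.erase j, D i l ^ 2 := by
        rw [Finset.sum_congr rfl fun l hl => hoff l (Finset.ne_of_mem_erase hl), Finset.sum_comm]
        simp only [Finset.mul_sum]
    _ ≤ (Dᵀ * D) j j ^ 2 + ∑ i, (k - 1) * D i j ^ 2 := by
        linarith [Finset.sum_le_sum fun i (_ : i ∈ univ) => hrest i]
    _ = ((Dᵀ * D) j j + (k - 1)) * (Dᵀ * D) j j := by
        rw [← Finset.mul_sum, hG j]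
        simp only [← sq]
        ring

lemma sum_sq_eq_card_filter_ne_zero {ι : Type*} {s : Finset ι} {f : ι → ℝ}
    (hf : ∀ i ∈ s, f i = 0 ∨ f i ^ 2 = 1) : ∑ i ∈ s, f i ^ 2 = #{i ∈ s | f i ≠ 0} := by
  rw [natCast_card_filter]
  refine Finset.sum_congr rfl fun i hi => ?_
  rcases hf i hi with h | h
  · simp [h]
  · have hne : f i ≠ 0 := fun h0 => by simp [h0] at h
    simp [h, hne]

lemma triSign_ne_zero_iff {T e : Finset ℕ} :
    triSign T e ≠ 0 ↔ e ⊆ T ∧ e.card = 2 ∧ T.card = 3 := by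
  unfold triSign
  split_ifs with h <;> simp [h]

lemma triSign_eq_zero_or_sq_eq_one (T e : Finset ℕ) : triSign T e = 0 ∨ triSign T e ^ 2 = 1 := by
  unfold triSign
  split_ifs <;> norm_num

lemma eq_union_of_triSign_ne_zero {T e e' : Finset ℕ} (he : triSign T e ≠ 0)
    (he' : triSign T e' ≠ 0) (hne : e ≠ e') : T = e ∪ e' := by
  obtain ⟨heT, he2, hT3⟩ := triSign_ne_zero_iff.1 he
  obtain ⟨he'T, he'2, -⟩ := triSign_ne_zero_iff.1 he'
  have hnsub : ¬e' ⊆ e := fun h => hne (eq_of_subset_of_card_le h (by rw [he2, he'2])).symm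
  have hlt : e.card < (e ∪ e').card := card_lt_card <|
    Finset.ssubset_iff_subset_ne.2 ⟨subset_union_left, fun h => hnsub (h ▸ subset_union_right)⟩
  exact (eq_of_subset_of_card_le (union_subset heT he'T) (by omega)).symm

section Delta1

variable (F : Finset (Finset ℕ))

lemma delta1_eq_zero_or_sq_eq_one (T : {T // T ∈ F}) (e : {e // e ∈ edgesOf F}) :
    delta1 F T e = 0 ∨ delta1 F T e ^ 2 = 1 :=
  triSign_eq_zero_or_sq_eq_one T.1 e.1

lemma sum_sq_delta1_row_le (T : {T // T ∈ F}) : ∑ e, delta1 F T e ^ 2 ≤ 3 := by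
  rw [sum_sq_eq_card_filter_ne_zero fun e _ => delta1_eq_zero_or_sq_eq_one F T e]
  by_cases hT : T.1.card = 3
  · have : #{e | delta1 F T e ≠ 0} ≤ #(T.1.powersetCard 2) := by
      refine card_le_card_of_injOn Subtype.val (fun e he => ?_) Subtype.val_injective.injOn
      obtain ⟨heT, he2, -⟩ := triSign_ne_zero_iff.1 (mem_filter.1 he).2
      exact mem_powersetCard.2 ⟨heT, he2⟩
    rw [card_powersetCard, hT] at this
    exact_mod_cast this
  · have : ∀ e : {e // e ∈ edgesOf F}, delta1 F T e = 0 := fun e =>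
      not_not.1 fun h => hT (triSign_ne_zero_iff.1 h).2.2
    simp [this]

lemma card_delta1_mul_ne_zero_le_one {e e' : {e // e ∈ edgesOf F}} (hne : e ≠ e') :
    #{T | delta1 F T e * delta1 F T e' ≠ 0} ≤ 1 := by
  refine card_le_one.2 fun T₁ h₁ T₂ h₂ => Subtype.ext ?_
  simp only [mem_filter, mem_univ, true_and, ne_eq, mul_eq_zero, not_or] at h₁ h₂
  have hne' : e.1 ≠ e'.1 := fun h => hne (Subtype.ext h)
  rw [eq_union_of_triSign_ne_zero h₁.1 h₁.2 hne', eq_union_of_triSign_ne_zero h₂.1 h₂.2 hne']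

lemma transpose_mul_delta1_apply_self (e : {e // e ∈ edgesOf F}) :
    ((delta1 F)ᵀ * delta1 F) e e = #{T ∈ F | triSign T e ≠ 0} := by
  rw [mul_apply]
  simp only [transpose_apply, ← sq]
  rw [show ∑ T, delta1 F T e ^ 2 = ∑ T ∈ F, triSign T e ^ 2 from
    Finset.sum_coe_sort F fun T => triSign T e ^ 2]
  exact sum_sq_eq_card_filter_ne_zero fun T _ => triSign_eq_zero_or_sq_eq_one T e

end Delta1

lemma nonempty_filter_triSign_ne_zero {F : Finset (Finset ℕ)} (hF : IsTriFam F) {e : Finset ℕ}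
    (he : e ∈ edgesOf F) : {T ∈ F | triSign T e ≠ 0}.Nonempty := by
  obtain ⟨T, hTF, heT⟩ := mem_biUnion.1 he
  obtain ⟨hsub, he2⟩ := mem_powersetCard.1 heT
  exact ⟨T, mem_filter.2 ⟨hTF, triSign_ne_zero_iff.2 ⟨hsub, he2, hF.2 T hTF⟩⟩⟩

/-- A triangle through the edge `{x, y}` is `{x, y, z}` for a common neighbour `z`. -/
lemma card_filter_triSign_ne_zero_le_card_inter_nbrs (F : Finset (Finset ℕ)) (x y : ℕ) :
    #{T ∈ F | triSign T {x, y} ≠ 0} ≤ #(nbrs F x ∩ nbrs F y) := by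
  refine (card_le_card fun T hT => ?_).trans
    (card_image_le (f := fun z => insert z ({x, y} : Finset ℕ)))
  obtain ⟨hTF, hT⟩ := mem_filter.1 hT
  obtain ⟨hsub, h2, hT3⟩ := triSign_ne_zero_iff.1 hT
  obtain ⟨z, hz⟩ := card_eq_one.1 (show #(T \ {x, y}) = 1 by
    rw [card_sdiff_of_subset hsub, hT3, h2])
  have hzT : z ∈ T \ {x, y} := hz ▸ mem_singleton_self z
  obtain ⟨hzT, hzxy⟩ := mem_sdiff.1 hzT
  have hzv : z ∈ vertsOf F := mem_biUnion.2 ⟨T, hTF, hzT⟩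
  have hxT : x ∈ T := hsub (by simp)
  have hyT : y ∈ T := hsub (by simp)
  refine mem_image.2 ⟨z, mem_inter.2 ⟨?_, ?_⟩, ?_⟩
  · exact mem_filter.2 ⟨hzv, fun h => hzxy (by simp [h]), T, hTF, hxT, hzT⟩
  · exact mem_filter.2 ⟨hzv, fun h => hzxy (by simp [h]), T, hTF, hyT, hzT⟩
  · rw [insert_eq, ← hz, sdiff_union_of_subset hsub]

theorem stmt2_general (F : Finset (Finset ℕ)) (hF : IsTriFam F) (n : ℕ)
    (hlam : (n : ℤ) ≤ ⌈lam F⌉) :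
    ∀ x y : ℕ, x ≠ y → ({x, y} : Finset ℕ) ∈ edgesOf F →
      (n : ℤ) - 2 ≤ ((nbrs F x ∩ nbrs F y).card : ℤ) := by
  intro x y _ he
  set ω : {e // e ∈ edgesOf F} := ⟨{x, y}, he⟩
  set t := #{T ∈ F | triSign T {x, y} ≠ 0}
  have hdiag : ((delta1 F)ᵀ * delta1 F) ω ω = t := transpose_mul_delta1_apply_self F ω
  have ht : 0 < t := card_pos.2 (nonempty_filter_triSign_ne_zero hF he)
  have hcol := sum_sq_transpose_mul_self_col_le (delta1 F) ω 3
    (delta1_eq_zero_or_sq_eq_one F) (sum_sq_delta1_row_le F)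
    fun e he => card_delta1_mul_ne_zero_le_one F he
  have hlam_le : lam F ≤ t + 2 := by
    refine lambdaMinPos_le_of_sum_sq_col_le ?_ (by rw [hdiag]; exact_mod_cast ht) ?_
    · simpa [conjTranspose_eq_transpose_of_trivial] using
        isHermitian_conjTranspose_mul_self (delta1 F)
    · rw [hdiag] at hcol ⊢
      linarith
  have hceil : ⌈lam F⌉ ≤ t + 2 := Int.ceil_le.2 (by exact_mod_cast hlam_le)
  have htN := card_filter_triSign_ne_zero_le_card_inter_nbrs F x y
  omega

/-- If `n ≤ ⌈λ(𝒯)⌉`, then for every edge `{x,y}` of the support graph `Γ₀(𝒯)`, the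
vertices `x` and `y` have at least `n - 2` common neighbors in `Γ₀(𝒯)`. -/
theorem stmt2 (F : Finset (Finset ℕ)) (hF : IsTriFam F) (n : ℕ) (hn : 1 ≤ n)
    (hlam : (n : ℤ) ≤ ⌈lam F⌉) :
    ∀ x y : ℕ, x ≠ y → ({x, y} : Finset ℕ) ∈ edgesOf F →
      (n : ℤ) - 2 ≤ ((nbrs F x ∩ nbrs F y).card : ℤ) :=
  stmt2_general F hF n hlam
end

section
/- Let 𝒯 be a triangle family and let n be a positive integer with n ≤ ⌈λ(𝒯)⌉. Then every vertex x of the support graph G = Γ₀(𝒯) is contained in at least n − 2 triples of 𝒯 and has degree d_G(x) ≥ n − 1 in G. Consequently, the minimum degree of Γ₀(𝒯) is at least n − 1 and |V(Γ₀(𝒯))| ≥ n. -/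
open Finset Matrix

/-!
Let `x` be a vertex, `e = xy` an edge of a triangle through `x`, and `m` the number of triangles
containing `e`. For the Gram matrix `A = δ₁ᵀ δ₁` and the unit vector `u` at `e` we have
`⟪u, A u⟫ = A e e = m`, while an off-diagonal entry `A e' e` is a sum of signs over the triangles
containing both `e` and `e'`, of which there is at most one; such `e'` are among the `2m` other
edges of the triangles through `e`, so `‖A u‖² ≤ m² + 2m`. Expanding `u` in an eigenbasis of `A`
shows that some positive eigenvalue is at most `‖A u‖² / ⟪u, A u⟫ ≤ m + 2`, whence
`n ≤ ⌈λ⌉ ≤ m + 2`. Finally `x` lies in the `m` triangles through `e`, and its neighbours include `y`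
and the `m` distinct third vertices of these triangles.
-/

open scoped InnerProductSpace in
theorem LinearMap.IsSymmetric.exists_hasEigenvalue_pos_le {E : Type*} [NormedAddCommGroup E]
    [InnerProductSpace ℝ E] [FiniteDimensional ℝ E] {T : E →ₗ[ℝ] E} (hT : T.IsSymmetric)
    {u : E} {C : ℝ} (hpos : 0 < ⟪u, T u⟫_ℝ) (hC : ‖T u‖ ^ 2 ≤ C * ⟪u, T u⟫_ℝ) :
    ∃ μ, Module.End.HasEigenvalue T μ ∧ 0 < μ ∧ μ ≤ C := by
  set b := hT.eigenvectorBasis rfl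
  set μ := hT.eigenvalues rfl
  set c := fun i => ⟪b i, u⟫_ℝ
  have hTc (i) : ⟪b i, T u⟫_ℝ = μ i * c i := by
    rw [← hT, hT.apply_eigenvectorBasis, real_inner_smul_left]; rfl
  have hquad : ⟪u, T u⟫_ℝ = ∑ i, μ i * c i ^ 2 := by
    rw [← b.sum_inner_mul_inner]
    refine sum_congr rfl fun i _ => ?_
    rw [hTc, real_inner_comm]; ring
  have hnorm : ‖T u‖ ^ 2 = ∑ i, μ i ^ 2 * c i ^ 2 := by
    rw [← real_inner_self_eq_norm_sq, ← b.sum_inner_mul_inner]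
    refine sum_congr rfl fun i _ => ?_
    rw [real_inner_comm, hTc]; ring
  have hC0 : 0 ≤ C := nonneg_of_mul_nonneg_left ((sq_nonneg _).trans hC) hpos
  by_contra! hbig
  have hbig' (i) (hi : 0 < μ i) : C < μ i := hbig _ (hT.hasEigenvalue_eigenvalues rfl i) hi
  -- every term `μ i c i² (μ i - C)` is nonnegative, yet they sum to at most `0`
  have hterm (i) : 0 ≤ μ i * c i ^ 2 * (μ i - C) := by
    rcases le_or_gt (μ i) 0 with hi | hi
    · exact mul_nonneg_of_nonpos_of_nonpos
        (mul_nonpos_of_nonpos_of_nonneg hi (sq_nonneg _)) (by linarith)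
    · exact mul_nonneg (by positivity) (sub_nonneg.2 (hbig' i hi).le)
  have hsum : ∑ i, μ i * c i ^ 2 * (μ i - C) = ‖T u‖ ^ 2 - C * ⟪u, T u⟫_ℝ := by
    rw [hnorm, hquad, mul_sum, ← sum_sub_distrib]
    exact sum_congr rfl fun i _ => by ring
  have hzero := (sum_eq_zero_iff_of_nonneg fun i _ => hterm i).1
    (le_antisymm (by linarith) (sum_nonneg fun i _ => hterm i))
  obtain ⟨i, -, hi⟩ : ∃ i ∈ univ, 0 < μ i * c i ^ 2 :=
    exists_lt_of_sum_lt (by rwa [sum_const_zero, ← hquad])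
  have hCμ := hbig' i (pos_of_mul_pos_left hi (sq_nonneg _))
  exact (mul_pos hi (sub_pos.2 hCμ)).ne' (hzero i (mem_univ _))

theorem lambdaMinPos_le {m : Type*} [Fintype m] {M : Matrix m m ℝ} (hM : M.IsHermitian)
    {u : m → ℝ} {C : ℝ} (hpos : 0 < u ⬝ᵥ M *ᵥ u)
    (hC : (M *ᵥ u) ⬝ᵥ (M *ᵥ u) ≤ C * (u ⬝ᵥ M *ᵥ u)) : lambdaMinPos M ≤ C := by
  classical
  have hT : (toEuclideanLin M).IsSymmetric := isSymmetric_toEuclideanLin_iff.2 hM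
  have hinner (x y : m → ℝ) : inner ℝ (WithLp.toLp 2 x) (WithLp.toLp 2 y) = x ⬝ᵥ y := by
    rw [EuclideanSpace.inner_eq_star_dotProduct, star_trivial, dotProduct_comm]
  obtain ⟨μ, hμ, hμpos, hμC⟩ := hT.exists_hasEigenvalue_pos_le (u := WithLp.toLp 2 u) (C := C)
    (by rwa [toLpLin_toLp, hinner])
    (by rwa [toLpLin_toLp, ← real_inner_self_eq_norm_sq, hinner, hinner])
  obtain ⟨v, hv⟩ := hμ.exists_hasEigenvector
  refine le_trans (csInf_le ⟨0, fun _ h => h.1.le⟩ ⟨hμpos, v.ofLp, ?_, ?_⟩) hμC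
  · simpa using hv.2
  · simpa using congrArg WithLp.ofLp hv.apply_eq_smul

theorem triSign_eq_zero_of_not_subset {T e : Finset ℕ} (h : ¬e ⊆ T) : triSign T e = 0 := by
  simp [triSign, h]

theorem abs_triSign_le (T e : Finset ℕ) : |triSign T e| ≤ if e ⊆ T then 1 else 0 := by
  unfold triSign
  split_ifs <;> simp_all

theorem triSign_mul_self {T e : Finset ℕ} (he : e ⊆ T) (he2 : e.card = 2) (hT : T.card = 3) :
    triSign T e * triSign T e = 1 := by
  unfold triSign
  split_ifs <;> simp_all

theorem mem_vertsOf {F : Finset (Finset ℕ)} {x : ℕ} : x ∈ vertsOf F ↔ ∃ T ∈ F, x ∈ T := by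
  simp [vertsOf]

theorem mem_edgesOf {F : Finset (Finset ℕ)} {e : Finset ℕ} :
    e ∈ edgesOf F ↔ ∃ T ∈ F, e ⊆ T ∧ e.card = 2 := by
  simp [edgesOf, mem_powersetCard]

theorem card_eq_two_of_mem_edgesOf {F : Finset (Finset ℕ)} {e : Finset ℕ} (he : e ∈ edgesOf F) :
    e.card = 2 := by
  obtain ⟨_, _, _, he2⟩ := mem_edgesOf.1 he
  exact he2

theorem mem_nbrs {F : Finset (Finset ℕ)} {x y : ℕ} :
    y ∈ nbrs F x ↔ x ≠ y ∧ ∃ T ∈ F, x ∈ T ∧ y ∈ T := by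
  simp only [nbrs, mem_filter, mem_vertsOf, and_iff_right_iff_imp]
  rintro ⟨-, T, hT, -, hy⟩
  exact ⟨T, hT, hy⟩

theorem eq_union_of_subset_of_subset {α : Type*} [DecidableEq α] {e e' T : Finset α}
    (hne : e ≠ e') (he : e.card = 2) (he' : e'.card = 2) (hT : T.card = 3)
    (h : e ⊆ T) (h' : e' ⊆ T) : T = e ∪ e' := by
  have hlt : e ⊂ e ∪ e' :=
    ssubset_of_subset_of_ne subset_union_left fun hu =>
      hne (eq_of_subset_of_card_le (hu ▸ subset_union_right) (by omega)).symm
  exact (eq_of_subset_of_card_le (union_subset h h') (by have := card_lt_card hlt; omega)).symm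

def edgeDeg (F : Finset (Finset ℕ)) (e : Finset ℕ) : ℕ :=
  #{T ∈ F | e ⊆ T}

section Gram

variable {F : Finset (Finset ℕ)}

theorem delta1_gram_apply (i j : {e // e ∈ edgesOf F}) :
    ((delta1 F)ᵀ * delta1 F) i j = ∑ T ∈ F, triSign T i.1 * triSign T j.1 := by
  simp only [mul_apply, transpose_apply, delta1, of_apply]
  exact sum_coe_sort F fun T => triSign T i.1 * triSign T j.1

theorem sum_triSign_mul_self (hF : ∀ T ∈ F, T.card = 3) {e : Finset ℕ} (he : e.card = 2) :
    ∑ T ∈ F, triSign T e * triSign T e = edgeDeg F e := by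
  rw [edgeDeg, ← sum_boole]
  refine sum_congr rfl fun T hT => ?_
  split_ifs with h
  · exact triSign_mul_self h he (hF T hT)
  · simp [triSign_eq_zero_of_not_subset h]

theorem abs_sum_triSign_mul_le (F : Finset (Finset ℕ)) (e' e : Finset ℕ) :
    |∑ T ∈ F, triSign T e' * triSign T e| ≤ #{T ∈ F | e ⊆ T ∧ e' ⊆ T} := by
  calc |∑ T ∈ F, triSign T e' * triSign T e|
      ≤ ∑ T ∈ F, |triSign T e'| * |triSign T e| := by
        simpa only [abs_mul] using abs_sum_le_sum_abs (fun T => triSign T e' * triSign T e) F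
    _ ≤ ∑ T ∈ F, (if e' ⊆ T then 1 else 0) * (if e ⊆ T then (1 : ℝ) else 0) :=
        sum_le_sum fun T _ => mul_le_mul (abs_triSign_le T e') (abs_triSign_le T e)
          (abs_nonneg _) (by split_ifs <;> norm_num)
    _ = ∑ T ∈ F, if e ⊆ T ∧ e' ⊆ T then (1 : ℝ) else 0 := by
        simp only [ite_zero_mul_ite_zero, mul_one, and_comm]
    _ = _ := sum_boole _ _

theorem card_filter_subset_subset_le_one (hF : ∀ T ∈ F, T.card = 3) {e e' : Finset ℕ}
    (hne : e ≠ e') (he : e.card = 2) (he' : e'.card = 2) : #{T ∈ F | e ⊆ T ∧ e' ⊆ T} ≤ 1 :=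
  card_le_one.2 fun T hT T' hT' => by
    simp only [mem_filter] at hT hT'
    rw [eq_union_of_subset_of_subset hne he he' (hF T hT.1) hT.2.1 hT.2.2,
      eq_union_of_subset_of_subset hne he he' (hF T' hT'.1) hT'.2.1 hT'.2.2]

theorem sq_sum_triSign_mul_le (hF : ∀ T ∈ F, T.card = 3) {e' e : Finset ℕ} (hne : e' ≠ e)
    (he' : e'.card = 2) (he : e.card = 2) :
    (∑ T ∈ F, triSign T e' * triSign T e) ^ 2 ≤ #{T ∈ F | e ⊆ T ∧ e' ⊆ T} := by
  have habs := abs_sum_triSign_mul_le F e' e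
  have hone : (#{T ∈ F | e ⊆ T ∧ e' ⊆ T} : ℝ) ≤ 1 := by
    exact_mod_cast card_filter_subset_subset_le_one hF hne.symm he he'
  rw [← sq_abs]
  nlinarith [abs_nonneg (∑ T ∈ F, triSign T e' * triSign T e)]

theorem sum_card_filter_subset_subset (hF : ∀ T ∈ F, T.card = 3) {e : Finset ℕ}
    (he : e.card = 2) :
    ∑ e' ∈ (edgesOf F).erase e, #{T ∈ F | e ⊆ T ∧ e' ⊆ T} = 2 * edgeDeg F e := by
  have hbelow (T) (hT : T ∈ F) :
      #(bipartiteBelow (fun e' T => e ⊆ T ∧ e' ⊆ T) ((edgesOf F).erase e) T) =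
        if e ⊆ T then 2 else 0 := by
    split_ifs with heT
    · have hedges : bipartiteBelow (fun e' T => e ⊆ T ∧ e' ⊆ T) ((edgesOf F).erase e) T =
          (T.powersetCard 2).erase e := by
        ext e'
        simp only [bipartiteBelow, mem_filter, mem_erase, mem_edgesOf, mem_powersetCard]
        exact ⟨fun ⟨⟨hne, _, _, _, h2⟩, _, h⟩ => ⟨hne, h, h2⟩,
          fun ⟨hne, h, h2⟩ => ⟨⟨hne, T, hT, h, h2⟩, heT, h⟩⟩
      rw [hedges, card_erase_of_mem (mem_powersetCard.2 ⟨heT, he⟩), card_powersetCard, hF T hT]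
      rfl
    · exact card_eq_zero.2 (filter_false_of_mem fun e' _ h => heT h.1)
  calc ∑ e' ∈ (edgesOf F).erase e, #{T ∈ F | e ⊆ T ∧ e' ⊆ T}
      = ∑ T ∈ F, #(bipartiteBelow (fun e' T => e ⊆ T ∧ e' ⊆ T) ((edgesOf F).erase e) T) :=
        sum_card_bipartiteAbove_eq_sum_card_bipartiteBelow _
    _ = 2 * edgeDeg F e := by
        rw [sum_congr rfl hbelow, ← sum_filter, sum_const, smul_eq_mul, mul_comm, edgeDeg]

end Gram

theorem lam_le_edgeDeg_add_two {F : Finset (Finset ℕ)} (hF : ∀ T ∈ F, T.card = 3)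
    {e : Finset ℕ} (he : e ∈ edgesOf F) : lam F ≤ edgeDeg F e + 2 := by
  classical
  obtain ⟨T, hT, heT, he2⟩ := mem_edgesOf.1 he
  set g : Finset ℕ → ℝ := fun e' => ∑ T ∈ F, triSign T e' * triSign T e
  have hcol : ((delta1 F)ᵀ * delta1 F) *ᵥ Pi.single ⟨e, he⟩ 1 = fun i => g i.1 := by
    ext i
    rw [mulVec_single_one, col_apply, delta1_gram_apply]
  have hdiag : g e = edgeDeg F e := sum_triSign_mul_self hF he2
  have hm : 0 < (edgeDeg F e : ℝ) := Nat.cast_pos.2 (card_pos.2 ⟨T, mem_filter.2 ⟨hT, heT⟩⟩)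
  have hoff : ∑ e' ∈ (edgesOf F).erase e, g e' ^ 2 ≤ 2 * edgeDeg F e :=
    calc ∑ e' ∈ (edgesOf F).erase e, g e' ^ 2
        ≤ ∑ e' ∈ (edgesOf F).erase e, (#{T ∈ F | e ⊆ T ∧ e' ⊆ T} : ℝ) :=
          sum_le_sum fun e' he' => sq_sum_triSign_mul_le hF (ne_of_mem_erase he')
            (card_eq_two_of_mem_edgesOf (mem_of_mem_erase he')) he2
      _ = 2 * edgeDeg F e := by exact_mod_cast sum_card_filter_subset_subset hF he2
  have hM : ((delta1 F)ᵀ * delta1 F).IsHermitian := by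
    simpa only [conjTranspose_eq_transpose_of_trivial] using
      isHermitian_conjTranspose_mul_self (delta1 F)
  refine lambdaMinPos_le hM (u := Pi.single ⟨e, he⟩ 1) ?_ ?_ <;>
    rw [hcol, single_one_dotProduct, hdiag]
  · exact hm
  · calc (fun i : {e // e ∈ edgesOf F} => g i.1) ⬝ᵥ (fun i => g i.1)
        = ∑ e' ∈ edgesOf F, g e' ^ 2 := by
          simp only [dotProduct, ← sq]
          exact sum_coe_sort (edgesOf F) fun e' => g e' ^ 2
      _ = edgeDeg F e ^ 2 + ∑ e' ∈ (edgesOf F).erase e, g e' ^ 2 := by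
          rw [← add_sum_erase _ _ he, hdiag]
      _ ≤ (edgeDeg F e + 2) * edgeDeg F e := by nlinarith

section Vertex

variable {F : Finset (Finset ℕ)}

theorem exists_edge_of_mem_vertsOf (hF : ∀ T ∈ F, T.card = 3) {x : ℕ} (hx : x ∈ vertsOf F) :
    ∃ y, x ≠ y ∧ {x, y} ∈ edgesOf F := by
  obtain ⟨T, hT, hxT⟩ := mem_vertsOf.1 hx
  obtain ⟨y, hy⟩ : (T.erase x).Nonempty := by
    rw [← card_pos, card_erase_of_mem hxT, hF T hT]
    norm_num
  obtain ⟨hyx, hyT⟩ := mem_erase.1 hy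
  exact ⟨y, hyx.symm, mem_edgesOf.2 ⟨T, hT, insert_subset hxT (singleton_subset_iff.2 hyT),
    card_pair hyx.symm⟩⟩

theorem edgeDeg_le_card_filter_mem (F : Finset (Finset ℕ)) {e : Finset ℕ} {x : ℕ} (hx : x ∈ e) :
    edgeDeg F e ≤ #{T ∈ F | x ∈ T} :=
  card_le_card (monotone_filter_right F fun _ _ h => h hx)

theorem edgeDeg_add_one_le_card_nbrs (hF : ∀ T ∈ F, T.card = 3) {x y : ℕ} (hxy : x ≠ y)
    (he : {x, y} ∈ edgesOf F) : edgeDeg F {x, y} + 1 ≤ #(nbrs F x) := by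
  obtain ⟨T₀, hT₀, heT₀, -⟩ := mem_edgesOf.1 he
  have hy : y ∈ nbrs F x := mem_nbrs.2 ⟨hxy, T₀, hT₀, heT₀ (by simp), heT₀ (by simp)⟩
  have hthird : edgeDeg F {x, y} ≤ #(((nbrs F x).erase y).powersetCard 1) := by
    refine card_le_card_of_injOn (· \ {x, y}) (fun T hT => ?_) fun T hT T' hT' h => ?_
    · obtain ⟨hTF, heT⟩ := mem_filter.1 hT
      refine mem_powersetCard.2 ⟨fun z hz => ?_, ?_⟩
      · obtain ⟨hzT, hze⟩ := mem_sdiff.1 hz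
        simp only [mem_insert, mem_singleton, not_or] at hze
        exact mem_erase.2 ⟨hze.2, mem_nbrs.2 ⟨Ne.symm hze.1, T, hTF, heT (by simp), hzT⟩⟩
      · rw [card_sdiff_of_subset heT, hF T hTF, card_pair hxy]
    · rw [← sdiff_union_of_subset (mem_filter.1 hT).2, ← sdiff_union_of_subset (mem_filter.1 hT').2]
      exact congrArg (· ∪ {x, y}) h
  rw [card_powersetCard, Nat.choose_one_right, card_erase_of_mem hy] at hthird
  have := card_pos.2 ⟨y, hy⟩
  omega

theorem card_nbrs_lt_card_vertsOf {x : ℕ} (hx : x ∈ vertsOf F) : #(nbrs F x) < #(vertsOf F) :=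
  card_lt_card ⟨filter_subset _ _, fun h => (mem_nbrs.1 (h hx)).1 rfl⟩

end Vertex

theorem stmt3_general (F : Finset (Finset ℕ)) (hF : IsTriFam F) (n : ℕ)
    (hlam : (n : ℤ) ≤ ⌈lam F⌉) :
    (∀ x ∈ vertsOf F,
      (n : ℤ) - 2 ≤ ((F.filter fun T => x ∈ T).card : ℤ) ∧
      (n : ℤ) - 1 ≤ ((nbrs F x).card : ℤ)) ∧
    (n : ℤ) ≤ ((vertsOf F).card : ℤ) := by
  have hvert : ∀ x ∈ vertsOf F,
      (n : ℤ) - 2 ≤ ((F.filter fun T => x ∈ T).card : ℤ) ∧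
      (n : ℤ) - 1 ≤ ((nbrs F x).card : ℤ) := by
    intro x hx
    obtain ⟨y, hxy, he⟩ := exists_edge_of_mem_vertsOf hF.2 hx
    have hceil : ⌈lam F⌉ ≤ edgeDeg F {x, y} + 2 := by
      simpa using Int.ceil_le_ceil (lam_le_edgeDeg_add_two hF.2 he)
    have hmem := edgeDeg_le_card_filter_mem F (mem_insert_self x {y})
    have hdeg := edgeDeg_add_one_le_card_nbrs hF.2 hxy he
    omega
  obtain ⟨T, hT⟩ := hF.1
  obtain ⟨x, hxT⟩ : T.Nonempty := by rw [← card_pos, hF.2 T hT]; norm_num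
  have hx : x ∈ vertsOf F := mem_vertsOf.2 ⟨T, hT, hxT⟩
  have hlt := card_nbrs_lt_card_vertsOf hx
  have hdeg := (hvert x hx).2
  exact ⟨hvert, by omega⟩

/-- If `n ≤ ⌈λ(𝒯)⌉`, then every vertex of the support graph lies in at least `n - 2`
triples of `𝒯` and has degree at least `n - 1`; consequently the minimum degree of
`Γ₀(𝒯)` is at least `n - 1` and `Γ₀(𝒯)` has at least `n` vertices. -/
theorem stmt3 (F : Finset (Finset ℕ)) (hF : IsTriFam F) (n : ℕ) (hn : 1 ≤ n)
    (hlam : (n : ℤ) ≤ ⌈lam F⌉) :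
    (∀ x ∈ vertsOf F,
      (n : ℤ) - 2 ≤ ((F.filter fun T => x ∈ T).card : ℤ) ∧
      (n : ℤ) - 1 ≤ ((nbrs F x).card : ℤ)) ∧
    (n : ℤ) ≤ ((vertsOf F).card : ℤ) :=
  stmt3_general F hF n hlam
end
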